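/- With the notation of the block-reduction: define the substitution φ(Y_j) = Π_{S ⊆ E_i, Y_j ∉ S} (1 − Z_i^S), where E_i is the block containing Y_j. Then for every good assignment z of the Z-variables with selected sets S_1,…,S_k, and for every j, φ(Y_j) evaluated at z equals 1 if Y_j ∈ S_i and 0 otherwise; consequently, for any polynomial g(X, Y_1,…,Y_n), Σ_{y∈{0,1}^n} g(X,y) = Σ_{z good} g̃(X, z), where g̃ = g with each Y_j replaced by φ(Y_j). -/

import Mathlib

open scoped Classical

/-!
At a good assignment, block `i` is the indicator of the single selected set `S_i`, so in
`∏_{S ∌ j} (1 - Z_i^S)` every factor is `1` except the one at `S = S_i`, which occurs (and is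
`0`) exactly when `j ∉ S_i`. Good assignments correspond bijectively to families `(S_i)_i` of
selected sets, and these to points of `{0,1}^n` via indicator functions; under this bijection
the substituted polynomial takes the value of `g` at the corresponding point.
-/

open Finset

theorem ExistsUnique.iff_eq {α : Sort*} {p : α → Prop} (h : ∃! x, p x) {a : α} (ha : p a)
    (x : α) : p x ↔ x = a :=
  ⟨fun hx => h.unique hx ha, fun hx => hx ▸ ha⟩

def Finset.equivBoolFun (β : Type*) [Fintype β] [DecidableEq β] : Finset β ≃ (β → Bool) where
  toFun s b := decide (b ∈ s)
  invFun w := univ.filter fun b => w b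
  left_inv s := by ext; simp
  right_inv w := by funext; simp

section OneHot

variable {ι β : Type*} [DecidableEq β]

theorem prod_filter_one_sub_ite_of_forall_iff [Fintype β] {R : Type*} [CommRing R]
    (p : β → Prop) [DecidablePred p] {w : β → Bool} {b₀ : β} (hw : ∀ b, w b = true ↔ b = b₀) :
    ∏ b ∈ univ.filter p, (1 - if w b then (1 : R) else 0) = if p b₀ then 0 else 1 := by
  have hterm : ∀ b, (1 - if w b then (1 : R) else 0) = if b = b₀ then 0 else 1 := by
    intro b
    by_cases hb : b = b₀ <;> simp [hb, hw]
  simp only [hterm, prod_ite_eq', mem_filter, mem_univ, true_and]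

theorem prod_filter_notMem_one_sub_ite_of_forall_iff {α : Type*} [Fintype α] [DecidableEq α]
    {R : Type*} [CommRing R] {w : Finset α → Bool} {S₀ : Finset α}
    (hw : ∀ S, w S = true ↔ S = S₀) (j : α) :
    ∏ S ∈ univ.filter (fun S : Finset α => j ∉ S), (1 - if w S then (1 : R) else 0)
      = if j ∈ S₀ then 1 else 0 := by
  rw [prod_filter_one_sub_ite_of_forall_iff _ hw]
  by_cases hj : j ∈ S₀ <;> simp [hj]

def oneHot (t : ι → β) : ι → β → Bool := fun i b => decide (b = t i)

theorem oneHot_injective : Function.Injective (oneHot : (ι → β) → ι → β → Bool) := by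
  intro t t' h
  funext i
  simpa [oneHot] using congrFun (congrFun h i) (t i)

theorem sum_oneHot_eq_sum_filter [DecidableEq ι] [Fintype ι] [Fintype β]
    [DecidablePred fun z : ι → β → Bool => ∀ i, ∃! b, z i b = true]
    {M : Type*} [AddCommMonoid M] (G : (ι → β → Bool) → M) :
    ∑ t : ι → β, G (oneHot t)
      = ∑ z ∈ univ.filter (fun z : ι → β → Bool => ∀ i, ∃! b, z i b = true), G z := by
  refine sum_bij (fun t _ => oneHot t) ?_ (fun t _ t' _ h => oneHot_injective h) ?_
    (fun _ _ => rfl)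
  · intro t _
    simp [oneHot]
  · intro z hz
    simp only [mem_filter, mem_univ, true_and] at hz
    choose t ht using fun i => (hz i).exists
    refine ⟨t, mem_univ _, funext fun i => funext fun b => Bool.eq_iff_iff.mpr ?_⟩
    simpa [oneHot] using ((hz i).iff_eq (ht i) b).symm

end OneHot

/-- Block reduction substitution. With blocks `E_i` of size `L` and
Z-variables `Z_i^S` for `S ⊆ E_i`, the substitution
`φ(Y_j) = ∏_{S ⊆ E_i, j ∉ S} (1 - Z_i^S)` (for `j` in block `i`) satisfies: for every
good assignment `z` with selected sets `S_i`, `φ(Y_j)(z) = 1` if `j ∈ S_i` and `0`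
otherwise; consequently, for any `g`,
`∑_{y ∈ {0,1}^n} g(X, y) = ∑_{z good} g̃(X, z)` where `g̃` substitutes `φ(Y_j)` for `Y_j`. -/
theorem stmt17 {R : Type*} [CommRing R] (k L : ℕ) :
    (∀ (z : Fin k → Finset (Fin L) → Bool), (∀ i, ∃! S : Finset (Fin L), z i S = true) →
      ∀ (i : Fin k) (Si : Finset (Fin L)), z i Si = true → ∀ j : Fin L,
        (∏ S ∈ Finset.univ.filter (fun S : Finset (Fin L) => j ∉ S),
            (1 - (if z i S then (1 : R) else 0)))
          = (if j ∈ Si then 1 else 0))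
    ∧
    (∀ g : (Fin k → Fin L → R) → R,
      ∑ y : Fin k → Fin L → Bool, g (fun i j => if y i j then 1 else 0)
        = ∑ z ∈ Finset.univ.filter
            (fun z : Fin k → Finset (Fin L) → Bool => ∀ i, ∃! S, z i S = true),
            g (fun i j =>
              ∏ S ∈ Finset.univ.filter (fun S : Finset (Fin L) => j ∉ S),
                (1 - (if z i S then (1 : R) else 0)))) := by
  refine ⟨fun z hz i Si hSi =>
    prod_filter_notMem_one_sub_ite_of_forall_iff ((hz i).iff_eq hSi), fun g => ?_⟩
  calc ∑ y : Fin k → Fin L → Bool, g (fun i j => if y i j then 1 else 0)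
      = ∑ t : Fin k → Finset (Fin L), g (fun i j => if j ∈ t i then 1 else 0) :=
        Fintype.sum_equiv (Equiv.piCongrRight fun _ => Finset.equivBoolFun (Fin L)).symm _ _
          fun y => by simp [Finset.equivBoolFun]
    _ = ∑ t : Fin k → Finset (Fin L), g (fun i j =>
          ∏ S ∈ univ.filter (fun S : Finset (Fin L) => j ∉ S),
            (1 - (if oneHot t i S then (1 : R) else 0))) := by
        refine Fintype.sum_congr _ _ fun t => congrArg g (funext fun i => funext fun j => ?_)
        exact (prod_filter_notMem_one_sub_ite_of_forall_iff (fun S => by simp [oneHot]) j).symm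
    _ = _ := sum_oneHot_eq_sum_filter fun z => g fun i j =>
          ∏ S ∈ univ.filter (fun S : Finset (Fin L) => j ∉ S), (1 - (if z i S then (1 : R) else 0))
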